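/- arXiv:1906.12245 — 2 statements merged into one kernel-verified Lean document; each statement's English description precedes it below -/
import Mathlib

section
/- For all nonnegative real numbers $u_1, u_2$, one has $(u_1^{7/3} - u_2^{7/3})(u_1 - u_2) \geq \tfrac12 (u_1^{4/3} + u_2^{4/3})(u_1 - u_2)^2$. -/
/-!
Writing `u₁ = a³` and `u₂ = b³`, the inequality becomes a polynomial one, and twice the
difference of its two sides is the square-times-positive expression
`(a² - b²)² (a² + b²) (a⁴ + a²b² + b⁴)`; in particular it holds for all real `a`, `b`.
-/

theorem two_mul_pow_seven_sub_mul_pow_three_sub {R : Type*} [CommRing R] (a b : R) :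
    2 * ((a ^ 7 - b ^ 7) * (a ^ 3 - b ^ 3)) - (a ^ 4 + b ^ 4) * (a ^ 3 - b ^ 3) ^ 2 =
      (a ^ 2 - b ^ 2) ^ 2 * (a ^ 2 + b ^ 2) * (a ^ 4 + a ^ 2 * b ^ 2 + b ^ 4) := by
  ring

theorem half_mul_pow_four_add_mul_sq_le {α : Type*} [Field α] [LinearOrder α]
    [IsStrictOrderedRing α] (a b : α) :
    1 / 2 * (a ^ 4 + b ^ 4) * (a ^ 3 - b ^ 3) ^ 2 ≤ (a ^ 7 - b ^ 7) * (a ^ 3 - b ^ 3) := by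
  have h := two_mul_pow_seven_sub_mul_pow_three_sub a b
  have : 0 ≤ (a ^ 2 - b ^ 2) ^ 2 * (a ^ 2 + b ^ 2) * (a ^ 4 + a ^ 2 * b ^ 2 + b ^ 4) := by
    positivity
  linarith

theorem Real.pow_rpow_natCast_div {a : ℝ} (ha : 0 ≤ a) {k : ℕ} (hk : k ≠ 0) (n : ℕ) :
    (a ^ k) ^ ((n : ℝ) / k) = a ^ n := by
  rw [← Real.rpow_natCast a k, ← Real.rpow_mul ha, mul_div_cancel₀ _ (Nat.cast_ne_zero.2 hk),
    Real.rpow_natCast]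

theorem stmt_0 (u₁ u₂ : ℝ) (h₁ : 0 ≤ u₁) (h₂ : 0 ≤ u₂) :
    (u₁ ^ ((7:ℝ)/3) - u₂ ^ ((7:ℝ)/3)) * (u₁ - u₂) ≥
      (1/2) * (u₁ ^ ((4:ℝ)/3) + u₂ ^ ((4:ℝ)/3)) * (u₁ - u₂) ^ 2 := by
  have cube_root {u : ℝ} (hu : 0 ≤ u) : ∃ a, 0 ≤ a ∧ a ^ 3 = u :=
    ⟨u ^ (3⁻¹ : ℝ), Real.rpow_nonneg hu _, Real.rpow_inv_natCast_pow hu three_ne_zero⟩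
  obtain ⟨a, ha, rfl⟩ := cube_root h₁
  obtain ⟨b, hb, rfl⟩ := cube_root h₂
  have rpow_div_three {c : ℝ} (hc : 0 ≤ c) (n : ℕ) : (c ^ 3) ^ ((n : ℝ) / 3) = c ^ n := by
    exact_mod_cast Real.pow_rpow_natCast_div hc three_ne_zero n
  simp only [← Nat.cast_ofNat (R := ℝ) (n := 7), ← Nat.cast_ofNat (R := ℝ) (n := 4),
    rpow_div_three ha, rpow_div_three hb]
  exact half_mul_pow_four_add_mul_sq_le a b
end

section
/- Let $\psi \in H^2_{\mathrm{loc}}(\mathbb{R}^3)$, let $\eta : \mathbb{R}^3 \to [0,1]$ be a $C^1$ function with $|\nabla \eta|^2 \leq c_\eta \eta$, and let $\xi(x) = e^{-\gamma|x-y|}$ with $0 < \gamma \leq 1$ and $y \in \mathbb{R}^3$. Assume $\eta^{1/2} \xi \nabla\psi, \ \eta \xi \partial_{ij}\psi, \ \eta^{1/2}\xi\Delta\psi \in L^2(\mathbb{R}^3)$ for all $i,j$, and that $\psi$, $\nabla\psi$, $\nabla^2\psi$ decay sufficiently for integration by parts. Then there is a universal constant $C$ (depending only on $c_\eta$) such that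 $\sum_{i,j=1}^3 \int_{\mathbb{R}^3} \eta^2 |\partial_{ij}\psi|^2 \xi^2\,dx \leq C \Big( \int_{\mathbb{R}^3} \eta |\nabla\psi|^2 \xi^2\,dx + \int_{\mathbb{R}^3} \eta |\Delta\psi|^2 \xi^2\,dx \Big)$. -/
/-!
Two integrations by parts give, for a compactly supported `C¹` weight `W`,
`∫ W (∂ᵢ∂ⱼψ)² = ∫ W ∂ᵢ∂ᵢψ ∂ⱼ∂ⱼψ + ∫ ∂ⱼW ∂ⱼψ ∂ᵢ∂ᵢψ - ∫ ∂ᵢW ∂ᵢ∂ⱼψ ∂ⱼψ`.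
Summed over `i, j`, the first term is the weighted Laplacian; for `W = p²` we have
`∂W = 2 p ∂p`, so when `|∇p| ≤ q` Young's inequality absorbs the two error terms into half of
the left-hand side plus `∫ q² |∇ψ|²`.

The weight `η ξ²` is neither smooth nor compactly supported, so it is replaced by `p = η χₙ ξ̂`:
`ξ̂ = exp (-γ √(|x - y|² + 1))` is smooth and `ξ ≤ e ξ̂ ≤ e ξ`, and `χₙ` is a cutoff at scale `n`
whose gradient is bounded uniformly in `n`. From `|∇η|² ≤ c η` and `η ≤ √η` we get
`|∇p| ≤ K √η ξ̂`, and dominated convergence lets `n → ∞`.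
-/

open MeasureTheory Filter Topology

noncomputable section

section DirDeriv

variable {E : Type*} [NormedAddCommGroup E] [NormedSpace ℝ E] {f g : E → ℝ} {x : E}

def dirDeriv (v : E) (f : E → ℝ) : E → ℝ := fun x => fderiv ℝ f x v

lemma ContDiff.contDiff_dirDeriv {m n : WithTop ℕ∞} (hf : ContDiff ℝ n f) (hmn : m + 1 ≤ n)
    (v : E) : ContDiff ℝ m (dirDeriv v f) :=
  (hf.fderiv_right hmn).clm_apply contDiff_const

lemma ContDiff.continuous_dirDeriv {n : WithTop ℕ∞} (hf : ContDiff ℝ n f) (hn : n ≠ 0) (v : E) :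
    Continuous (dirDeriv v f) :=
  (hf.continuous_fderiv hn).clm_apply continuous_const

lemma HasCompactSupport.dirDeriv (hf : HasCompactSupport f) (v : E) :
    HasCompactSupport (dirDeriv v f) :=
  (hf.fderiv ℝ).comp_left (g := fun L : E →L[ℝ] ℝ => L v) rfl

lemma dirDeriv_mul (hf : DifferentiableAt ℝ f x) (hg : DifferentiableAt ℝ g x) (v : E) :
    dirDeriv v (fun x => f x * g x) x = f x * dirDeriv v g x + dirDeriv v f x * g x := by
  simp only [dirDeriv, fderiv_fun_mul hf hg, add_apply, smul_apply, smul_eq_mul]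
  ring

lemma dirDeriv_sq (hf : DifferentiableAt ℝ f x) (v : E) :
    dirDeriv v (fun x => f x ^ 2) x = 2 * f x * dirDeriv v f x := by
  simp only [sq]
  rw [dirDeriv_mul hf hf]
  ring

lemma dirDeriv_comm (hf : ContDiff ℝ 2 f) (u v : E) :
    dirDeriv u (dirDeriv v f) = dirDeriv v (dirDeriv u f) := by
  have hd : Differentiable ℝ (fderiv ℝ f) := (hf.fderiv_right le_rfl).differentiable one_ne_zero
  have hsecond : ∀ x w w', dirDeriv w (dirDeriv w' f) x = fderiv ℝ (fderiv ℝ f) x w w' := by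
    intro x w w'
    show fderiv ℝ (fun y => fderiv ℝ f y w') x w = _
    rw [fderiv_clm_apply (hd x) (differentiableAt_const w')]
    simp
  funext x
  rw [hsecond, hsecond, (hf.contDiffAt.isSymmSndFDerivAt (by simp)) u v]

lemma norm_fderiv_mul_le (hf : DifferentiableAt ℝ f x) (hg : DifferentiableAt ℝ g x) :
    ‖fderiv ℝ (fun x => f x * g x) x‖ ≤ |f x| * ‖fderiv ℝ g x‖ + |g x| * ‖fderiv ℝ f x‖ := by
  rw [fderiv_fun_mul hf hg, ← Real.norm_eq_abs, ← Real.norm_eq_abs, ← norm_smul, ← norm_smul]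
  exact norm_add_le _ _

end DirDeriv

lemma Continuous.integrable_of_eq_zero_of_hasCompactSupport {X : Type*} [TopologicalSpace X]
    [MeasurableSpace X] [OpensMeasurableSpace X] {μ : Measure X} [IsFiniteMeasureOnCompacts μ]
    {F p : X → ℝ} (hF : Continuous F) (hp : HasCompactSupport p) (h : ∀ x, p x = 0 → F x = 0) :
    Integrable F μ :=
  hF.integrable_of_hasCompactSupport (hp.mono fun x hx hpx => hx (h x hpx))

section IntegrationByParts

variable {E : Type*} [NormedAddCommGroup E] [NormedSpace ℝ E] [FiniteDimensional ℝ E]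
  [MeasurableSpace E] [BorelSpace E] {μ : Measure E} [μ.IsAddHaarMeasure]

lemma integral_mul_mul_dirDeriv_eq_neg {W f g : E → ℝ} (hW : ContDiff ℝ 1 W)
    (hWc : HasCompactSupport W) (hf : ContDiff ℝ 1 f) (hg : ContDiff ℝ 1 g) (v : E) :
    ∫ x, W x * f x * dirDeriv v g x ∂μ =
      -∫ x, (W x * dirDeriv v f x * g x + dirDeriv v W x * f x * g x) ∂μ := by
  have hWf : ContDiff ℝ 1 (fun x => W x * f x) := hW.mul hf
  have hWfc : HasCompactSupport (fun x => W x * f x) := hWc.mul_right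
  refine (integral_mul_fderiv_eq_neg_fderiv_mul_of_integrable
    (((hWf.continuous_dirDeriv one_ne_zero v).mul hg.continuous).integrable_of_hasCompactSupport
      (hWfc.dirDeriv v).mul_right)
    ((hWf.continuous.mul (hg.continuous_dirDeriv one_ne_zero v)).integrable_of_hasCompactSupport
      hWfc.mul_right)
    ((hWf.continuous.mul hg.continuous).integrable_of_hasCompactSupport hWfc.mul_right)
    (fun x _ => hWf.differentiable one_ne_zero x)
    (fun x _ => hg.differentiable one_ne_zero x)).trans ?_
  congr 2 with x
  rw [show fderiv ℝ (fun x => W x * f x) x v = dirDeriv v (fun x => W x * f x) x from rfl,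
    dirDeriv_mul (hW.differentiable one_ne_zero x) (hf.differentiable one_ne_zero x)]
  ring

lemma integral_mul_sq_dirDeriv_eq {W ψ : E → ℝ} (hW : ContDiff ℝ 1 W) (hWc : HasCompactSupport W)
    (hψ : ContDiff ℝ 3 ψ) (u v : E) :
    ∫ x, W x * dirDeriv u (dirDeriv v ψ) x ^ 2 ∂μ =
      ∫ x, (W x * dirDeriv v (dirDeriv v ψ) x * dirDeriv u (dirDeriv u ψ) x
        + dirDeriv v W x * dirDeriv v ψ x * dirDeriv u (dirDeriv u ψ) x
        - dirDeriv u W x * dirDeriv u (dirDeriv v ψ) x * dirDeriv v ψ x) ∂μ := by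
  set g := dirDeriv v ψ
  set a := dirDeriv u g
  set b := dirDeriv u (dirDeriv u ψ)
  have hg : ContDiff ℝ 2 g := hψ.contDiff_dirDeriv (by norm_num) v
  have ha : ContDiff ℝ 1 a := hg.contDiff_dirDeriv (by norm_num) u
  have hb : ContDiff ℝ 1 b :=
    (hψ.contDiff_dirDeriv (m := 2) (by norm_num) u).contDiff_dirDeriv (by norm_num) u
  have hda : dirDeriv u a = dirDeriv v b := by
    simp only [a, b, g, dirDeriv_comm (hψ.of_le (by norm_num)) u v]
    exact dirDeriv_comm (hψ.contDiff_dirDeriv (by norm_num) u) u v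
  have ibp₁ := integral_mul_mul_dirDeriv_eq_neg (μ := μ) hW hWc ha (hg.of_le (by norm_num)) u
  have ibp₂ := integral_mul_mul_dirDeriv_eq_neg (μ := μ) hW hWc (hg.of_le (by norm_num)) hb v
  rw [hda] at ibp₁
  have hint : ∀ {F h k : E → ℝ}, Continuous F → HasCompactSupport F → Continuous h →
      Continuous k → Integrable (fun x => F x * h x * k x) μ := fun hF hFc hh hk =>
    ((hF.mul hh).mul hk).integrable_of_hasCompactSupport hFc.mul_right.mul_right
  have hWuag := hint (hW.continuous_dirDeriv one_ne_zero u) (hWc.dirDeriv u) ha.continuous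
    hg.continuous
  have hWvgb := hint (hW.continuous_dirDeriv one_ne_zero v) (hWc.dirDeriv v) hg.continuous
    hb.continuous
  have hWcb := hint hW.continuous hWc (hg.continuous_dirDeriv (by norm_num) v) hb.continuous
  have hWbg := hint hW.continuous hWc (hb.continuous_dirDeriv one_ne_zero v) hg.continuous
  have hsq : ∫ x, W x * a x ^ 2 ∂μ = ∫ x, W x * a x * dirDeriv u g x ∂μ := by
    congr 1 with x
    ring
  have hswap : ∫ x, W x * dirDeriv v b x * g x ∂μ = ∫ x, W x * g x * dirDeriv v b x ∂μ := by
    congr 1 with x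
    ring
  have hsplit : ∫ x, (W x * dirDeriv v g x * b x + dirDeriv v W x * g x * b x
      - dirDeriv u W x * a x * g x) ∂μ = ∫ x, (W x * dirDeriv v g x * b x
        + dirDeriv v W x * g x * b x) ∂μ - ∫ x, dirDeriv u W x * a x * g x ∂μ :=
    integral_sub (hWcb.add hWvgb) hWuag
  rw [hsq, ibp₁, integral_add hWbg hWuag, hswap, ibp₂, hsplit]
  ring

end IntegrationByParts

lemma exists_abs_deriv_smoothTransition_le : ∃ κ, ∀ t, |deriv Real.smoothTransition t| ≤ κ := by
  have hc : HasCompactSupport (deriv Real.smoothTransition) := by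
    refine HasCompactSupport.intro (isCompact_Icc (a := 0) (b := 1)) fun t ht => ?_
    rcases not_and_or.1 ht with h | h
    · have : Real.smoothTransition =ᶠ[𝓝 t] fun _ => 0 := by
        filter_upwards [Iio_mem_nhds (not_le.1 h)] with s hs
        exact Real.smoothTransition.zero_of_nonpos hs.le
      simp [this.deriv_eq]
    · have : Real.smoothTransition =ᶠ[𝓝 t] fun _ => 1 := by
        filter_upwards [Ioi_mem_nhds (not_le.1 h)] with s hs
        exact Real.smoothTransition.one_of_one_le hs.le
      simp [this.deriv_eq]
  simpa [Real.norm_eq_abs] using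
    ((Real.smoothTransition.contDiff (n := 1)).continuous_deriv
      le_rfl).bounded_above_of_compact_support hc

section Weights

variable {E : Type*} [NormedAddCommGroup E]

def smoothDist (y x : E) : ℝ := √(‖x - y‖ ^ 2 + 1)

def expWeight (γ : ℝ) (y x : E) : ℝ := Real.exp (-γ * smoothDist y x)

def cutoff (R : ℝ) (y x : E) : ℝ := Real.smoothTransition (2 - R⁻¹ * smoothDist y x)

lemma dist_le_smoothDist (y x : E) : dist x y ≤ smoothDist y x := by
  rw [dist_eq_norm]
  exact Real.le_sqrt_of_sq_le (by linarith)

lemma smoothDist_le_dist_add_one (y x : E) : smoothDist y x ≤ dist x y + 1 := by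
  rw [dist_eq_norm, smoothDist, Real.sqrt_le_left (by positivity)]
  nlinarith [norm_nonneg (x - y)]

lemma expWeight_pos (γ : ℝ) (y x : E) : 0 < expWeight γ y x := Real.exp_pos _

lemma expWeight_le_exp_neg_dist {γ : ℝ} (hγ : 0 ≤ γ) (y x : E) :
    expWeight γ y x ≤ Real.exp (-γ * dist x y) :=
  Real.exp_le_exp.2 (by nlinarith [dist_le_smoothDist y x])

lemma exp_neg_dist_le_exp_one_mul_expWeight {γ : ℝ} (hγ₀ : 0 ≤ γ) (hγ₁ : γ ≤ 1) (y x : E) :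
    Real.exp (-γ * dist x y) ≤ Real.exp 1 * expWeight γ y x := by
  rw [expWeight, ← Real.exp_add]
  exact Real.exp_le_exp.2 (by nlinarith [smoothDist_le_dist_add_one y x, dist_le_smoothDist y x])

lemma cutoff_nonneg (R : ℝ) (y x : E) : 0 ≤ cutoff R y x := Real.smoothTransition.nonneg _

lemma cutoff_le_one (R : ℝ) (y x : E) : cutoff R y x ≤ 1 := Real.smoothTransition.le_one _

lemma cutoff_eq_one {R : ℝ} {y x : E} (hR : 0 < R) (h : smoothDist y x ≤ R) :
    cutoff R y x = 1 := by
  refine Real.smoothTransition.one_of_one_le ?_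
  have : R⁻¹ * smoothDist y x ≤ 1 := by rwa [inv_mul_le_one₀ hR]
  linarith

lemma hasCompactSupport_cutoff [ProperSpace E] {R : ℝ} (hR : 0 < R) (y : E) :
    HasCompactSupport (cutoff R y) := by
  refine HasCompactSupport.intro (isCompact_closedBall y (2 * R)) fun x hx => ?_
  refine Real.smoothTransition.zero_of_nonpos ?_
  have : 2 ≤ R⁻¹ * smoothDist y x := by
    have hx' : 2 * R < dist x y := by simpa using hx
    rw [le_inv_mul_iff₀ hR]
    linarith [dist_le_smoothDist y x]
  linarith

lemma integral_mul_exp_neg_dist_sq_le [MeasurableSpace E] {μ : Measure E} {γ : ℝ} {y : E}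
    {f : E → ℝ} (hf : ∀ x, 0 ≤ f x) (hγ₀ : 0 ≤ γ) (hγ₁ : γ ≤ 1)
    (h : Integrable (fun x => f x * expWeight γ y x ^ 2) μ) :
    ∫ x, f x * Real.exp (-γ * dist x y) ^ 2 ∂μ ≤
      Real.exp 1 ^ 2 * ∫ x, f x * expWeight γ y x ^ 2 ∂μ := by
  rw [← integral_const_mul]
  refine integral_mono_of_nonneg (ae_of_all _ fun x => mul_nonneg (hf x) (sq_nonneg _))
    (h.const_mul _) (ae_of_all _ fun x => ?_)
  have := pow_le_pow_left₀ (Real.exp_pos _).le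
    (exp_neg_dist_le_exp_one_mul_expWeight hγ₀ hγ₁ y x) 2
  calc f x * Real.exp (-γ * dist x y) ^ 2 ≤ f x * (Real.exp 1 * expWeight γ y x) ^ 2 :=
        mul_le_mul_of_nonneg_left this (hf x)
    _ = _ := by ring

lemma integral_mul_expWeight_sq_le [MeasurableSpace E] {μ : Measure E} {γ : ℝ} {y : E}
    {f : E → ℝ} (hf : ∀ x, 0 ≤ f x) (hγ : 0 ≤ γ)
    (h : Integrable (fun x => f x * Real.exp (-γ * dist x y) ^ 2) μ) :
    ∫ x, f x * expWeight γ y x ^ 2 ∂μ ≤ ∫ x, f x * Real.exp (-γ * dist x y) ^ 2 ∂μ :=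
  integral_mono_of_nonneg (ae_of_all _ fun x => mul_nonneg (hf x) (sq_nonneg _)) h
    (ae_of_all _ fun x => mul_le_mul_of_nonneg_left
      (pow_le_pow_left₀ (expWeight_pos γ y x).le (expWeight_le_exp_neg_dist hγ y x) 2) (hf x))

lemma mul_cutoff_mul_expWeight_sq_le {a γ R : ℝ} {y x : E} (ha : a ∈ Set.Icc 0 1)
    (hγ : 0 ≤ γ) : (a * cutoff R y x * expWeight γ y x) ^ 2 ≤
      a * Real.exp (-γ * dist x y) ^ 2 := by
  obtain ⟨h₀, h₁⟩ := ha
  calc (a * cutoff R y x * expWeight γ y x) ^ 2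
      = a ^ 2 * cutoff R y x ^ 2 * expWeight γ y x ^ 2 := by ring
    _ ≤ a * 1 * Real.exp (-γ * dist x y) ^ 2 :=
        mul_le_mul (mul_le_mul (pow_le_of_le_one h₀ h₁ two_ne_zero)
          (pow_le_one₀ (cutoff_nonneg R y x) (cutoff_le_one R y x)) (sq_nonneg _) h₀)
          (pow_le_pow_left₀ (expWeight_pos γ y x).le (expWeight_le_exp_neg_dist hγ y x) 2)
          (sq_nonneg _) (by simpa using h₀)
    _ = _ := by ring

variable [InnerProductSpace ℝ E]

lemma contDiff_smoothDist {n : WithTop ℕ∞} (y : E) : ContDiff ℝ n (smoothDist y) :=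
  (((contDiff_id.sub contDiff_const).norm_sq ℝ).add contDiff_const).sqrt fun _ => by positivity

lemma norm_fderiv_smoothDist_le (y x : E) : ‖fderiv ℝ (smoothDist y) x‖ ≤ 1 := by
  have h := (((hasFDerivAt_id x).sub_const y).norm_sq.add_const 1).sqrt (by positivity)
  rw [show smoothDist y = fun z => √(‖id z - y‖ ^ 2 + 1) from rfl, h.fderiv]
  refine ContinuousLinearMap.opNorm_le_bound _ zero_le_one fun v => ?_
  have hs : ‖x - y‖ ≤ √(‖x - y‖ ^ 2 + 1) := by
    simpa [dist_eq_norm, smoothDist] using dist_le_smoothDist y x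
  have hs₀ : 0 < √(‖x - y‖ ^ 2 + 1) := Real.sqrt_pos.2 (by positivity)
  simp only [id_eq, one_div, mul_inv_rev, map_sub, ContinuousLinearMap.comp_id, smul_apply,
    sub_apply, coe_innerSL_apply, nsmul_eq_mul, Nat.cast_ofNat, smul_eq_mul, norm_mul, norm_inv,
    Real.norm_eq_abs, abs_two, one_mul]
  rw [← inner_sub_left, abs_of_pos hs₀, mul_assoc, inv_mul_cancel_left₀ two_ne_zero,
    inv_mul_le_iff₀ hs₀]
  exact (abs_real_inner_le_norm _ _).trans (mul_le_mul_of_nonneg_right hs (norm_nonneg v))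

lemma contDiff_expWeight {n : WithTop ℕ∞} (γ : ℝ) (y : E) : ContDiff ℝ n (expWeight γ y) :=
  Real.contDiff_exp.comp (contDiff_const.mul (contDiff_smoothDist y))

lemma norm_fderiv_expWeight_le {γ : ℝ} (hγ : 0 ≤ γ) (y x : E) :
    ‖fderiv ℝ (expWeight γ y) x‖ ≤ γ * expWeight γ y x := by
  have hd : DifferentiableAt ℝ (smoothDist y) x :=
    (contDiff_smoothDist (n := 1) y).differentiable one_ne_zero x
  unfold expWeight
  rw [fderiv_exp (hd.const_mul _), fderiv_const_mul hd, norm_smul, norm_smul, Real.norm_eq_abs,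
    Real.norm_eq_abs, abs_of_pos (Real.exp_pos _), abs_neg, abs_of_nonneg hγ]
  have := mul_le_mul_of_nonneg_left (mul_le_mul_of_nonneg_left (norm_fderiv_smoothDist_le y x) hγ)
    (Real.exp_pos (-γ * smoothDist y x)).le
  linarith

lemma contDiff_cutoff {n : ℕ∞} (R : ℝ) (y : E) : ContDiff ℝ n (cutoff R y) :=
  Real.smoothTransition.contDiff.comp
    (contDiff_const.sub (contDiff_const.mul (contDiff_smoothDist y)))

lemma norm_fderiv_cutoff_le {κ R : ℝ} (hκ : ∀ t, |deriv Real.smoothTransition t| ≤ κ)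
    (hR : 1 ≤ R) (y x : E) : ‖fderiv ℝ (cutoff R y) x‖ ≤ κ := by
  have hd : DifferentiableAt ℝ (smoothDist y) x :=
    (contDiff_smoothDist (n := 1) y).differentiable one_ne_zero x
  rw [show cutoff R y = Real.smoothTransition ∘ fun x => 2 - R⁻¹ * smoothDist y x from rfl,
    fderiv_comp x (Real.smoothTransition.contDiff (n := 1).differentiable one_ne_zero _)
      ((hd.const_mul _).const_sub _),
    fderiv_const_sub, fderiv_const_mul hd]
  refine (ContinuousLinearMap.opNorm_comp_le _ _).trans ?_
  rw [← norm_deriv_eq_norm_fderiv, norm_neg, norm_smul, Real.norm_eq_abs, Real.norm_eq_abs]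
  have hR' : |R⁻¹| * ‖fderiv ℝ (smoothDist y) x‖ ≤ 1 := by
    rw [abs_of_pos (by positivity)]
    exact mul_le_one₀ (inv_le_one_of_one_le₀ hR) (norm_nonneg _) (norm_fderiv_smoothDist_le y x)
  exact (mul_le_of_le_one_right (abs_nonneg _) hR').trans (hκ _)

section Measure

variable [MeasurableSpace E] [OpensMeasurableSpace E] {μ : Measure E} {γ : ℝ} {y : E}

lemma tendsto_integral_cutoff_sq_mul {w : E → ℝ} (hw : Integrable w μ) :
    Tendsto (fun n : ℕ => ∫ x, cutoff (n + 1) y x ^ 2 * w x ∂μ) atTop (𝓝 (∫ x, w x ∂μ)) := by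
  refine tendsto_integral_of_dominated_convergence (fun x => ‖w x‖)
    (fun n => (((contDiff_cutoff (n := 0) _ y).continuous.pow 2).aestronglyMeasurable.mul hw.1))
    hw.norm (fun n => ae_of_all _ fun x => ?_) (ae_of_all _ fun x => ?_)
  · rw [norm_mul]
    refine mul_le_of_le_one_left (norm_nonneg _) ?_
    rw [norm_pow, Real.norm_eq_abs, abs_of_nonneg (cutoff_nonneg _ y x)]
    exact pow_le_one₀ (cutoff_nonneg _ y x) (cutoff_le_one _ y x)
  · refine tendsto_const_nhds.congr' (EventuallyEq.symm ?_)
    filter_upwards [eventually_ge_atTop ⌈smoothDist y x⌉₊] with n hn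
    have hn' : smoothDist y x ≤ n + 1 := by
      have : (⌈smoothDist y x⌉₊ : ℝ) ≤ n := by exact_mod_cast hn
      linarith [Nat.le_ceil (smoothDist y x)]
    rw [cutoff_eq_one (by positivity) hn', one_pow, one_mul]

lemma MeasureTheory.Integrable.mul_expWeight_sq {f : E → ℝ} (hγ : 0 ≤ γ)
    (hf : AEStronglyMeasurable f μ)
    (h : Integrable (fun x => f x * Real.exp (-γ * dist x y) ^ 2) μ) :
    Integrable (fun x => f x * expWeight γ y x ^ 2) μ := by
  refine h.mono (hf.mul ((contDiff_expWeight (n := 0) γ y).continuous.pow 2).aestronglyMeasurable)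
    (ae_of_all _ fun x => ?_)
  rw [norm_mul, norm_mul]
  gcongr
  rw [Real.norm_eq_abs, Real.norm_eq_abs, abs_pow, abs_pow, abs_of_pos (expWeight_pos γ y x),
    abs_of_pos (Real.exp_pos _)]
  exact pow_le_pow_left₀ (expWeight_pos γ y x).le (expWeight_le_exp_neg_dist hγ y x) 2

end Measure

lemma norm_fderiv_mul_cutoff_mul_expWeight_le {η : E → ℝ} {c κ γ R : ℝ} (hη : ContDiff ℝ 1 η)
    (hη₀₁ : ∀ x, η x ∈ Set.Icc 0 1) (hηc : ∀ x, ‖fderiv ℝ η x‖ ^ 2 ≤ c * η x) (hγ₀ : 0 ≤ γ)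
    (hγ₁ : γ ≤ 1) (hκ : ∀ t, |deriv Real.smoothTransition t| ≤ κ) (hR : 1 ≤ R) (y x : E) :
    ‖fderiv ℝ (fun x => η x * cutoff R y x * expWeight γ y x) x‖
      ≤ (√c + κ + 1) * √(η x) * expWeight γ y x := by
  obtain ⟨h₀, h₁⟩ := hη₀₁ x
  have hηd := hη.differentiable one_ne_zero x
  have hχd := (contDiff_cutoff (n := 1) R y).differentiable one_ne_zero x
  have hξd := (contDiff_expWeight (n := 1) γ y).differentiable one_ne_zero x
  have hDη : ‖fderiv ℝ η x‖ ≤ √c * √(η x) := by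
    rw [← Real.sqrt_mul' c h₀]
    exact Real.le_sqrt_of_sq_le (hηc x)
  have hDχ := norm_fderiv_cutoff_le hκ hR y x
  have hDξ := norm_fderiv_expWeight_le hγ₀ y x
  have hηχ := norm_fderiv_mul_le hηd hχd
  have h := norm_fderiv_mul_le (f := fun x => η x * cutoff R y x) (hηd.mul hχd) hξd
  have hκ₀ : 0 ≤ κ := (abs_nonneg _).trans (hκ 0)
  have hη_le : η x ≤ √(η x) := (Real.le_sqrt h₀ h₀).2 (by nlinarith)
  have hχ₀ := cutoff_nonneg R y x
  have hχ₁ := cutoff_le_one R y x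
  have hξ₀ := (expWeight_pos γ y x).le
  rw [abs_of_nonneg (mul_nonneg h₀ hχ₀), abs_of_nonneg hξ₀] at h
  rw [abs_of_nonneg h₀, abs_of_nonneg hχ₀] at hηχ
  calc _ ≤ η x * cutoff R y x * (γ * expWeight γ y x)
        + expWeight γ y x * (η x * κ + cutoff R y x * (√c * √(η x))) := by
        refine h.trans (add_le_add (mul_le_mul_of_nonneg_left hDξ (mul_nonneg h₀ hχ₀))
          (mul_le_mul_of_nonneg_left (hηχ.trans (add_le_add ?_ ?_)) hξ₀))
        · exact mul_le_mul_of_nonneg_left hDχ h₀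
        · exact mul_le_mul_of_nonneg_left hDη hχ₀
    _ ≤ √(η x) * 1 * (1 * expWeight γ y x)
        + expWeight γ y x * (√(η x) * κ + 1 * (√c * √(η x))) := by gcongr
    _ = _ := by ring

end Weights

-- `P`, `d`, `g`, `a` stand for the values of `p`, `∇p`, `∇ψ`, `∇²ψ` at one point.
lemma sum_hessian_integrand_le {ι : Type*} [Fintype ι] (P Q : ℝ) (d g : ι → ℝ) (a : ι → ι → ℝ)
    (hd : ∑ i, d i ^ 2 ≤ Q ^ 2) :
    ∑ i, ∑ j, (P ^ 2 * a j j * a i i + 2 * P * d j * g j * a i i - 2 * P * d i * a i j * g j)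
      ≤ 2 * (P ^ 2 * (∑ i, a i i) ^ 2) + (1 / 2) * ∑ i, ∑ j, P ^ 2 * a i j ^ 2
        + 3 * (Q ^ 2 * ∑ j, g j ^ 2) := by
  have hmain : ∑ i, ∑ j, P ^ 2 * a j j * a i i = P ^ 2 * (∑ i, a i i) ^ 2 := by
    rw [sq (∑ i, a i i), Finset.sum_mul_sum, Finset.mul_sum]
    refine Finset.sum_congr rfl fun i _ => ?_
    rw [Finset.mul_sum]
    exact Finset.sum_congr rfl fun j _ => by ring
  have hcross : ∑ i, ∑ j, 2 * P * d j * g j * a i i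
      = 2 * (P * ∑ i, a i i) * ∑ j, d j * g j := by
    calc ∑ i, ∑ j, 2 * P * d j * g j * a i i = ∑ i, ∑ j, (2 * P * a i i) * (d j * g j) :=
          Finset.sum_congr rfl fun i _ => Finset.sum_congr rfl fun j _ => by ring
      _ = (∑ i, 2 * P * a i i) * ∑ j, d j * g j := (Finset.sum_mul_sum _ _ _ _).symm
      _ = _ := by rw [← Finset.mul_sum]; ring
  have hmixed : ∑ i, ∑ j, -(2 * P * d i * a i j * g j)
      ≤ ∑ i, ∑ j, ((1 / 2) * (P ^ 2 * a i j ^ 2) + 2 * (d i ^ 2 * g j ^ 2)) :=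
    Finset.sum_le_sum fun i _ => Finset.sum_le_sum fun j _ => by
      nlinarith [sq_nonneg (P * a i j + 2 * d i * g j)]
  have hdg : ∑ i, ∑ j, d i ^ 2 * g j ^ 2 = (∑ i, d i ^ 2) * ∑ j, g j ^ 2 :=
    (Finset.sum_mul_sum _ _ _ _).symm
  have hcs := Finset.sum_mul_sq_le_sq_mul_sq Finset.univ d g
  have hg : 0 ≤ ∑ j, g j ^ 2 := Finset.sum_nonneg fun j _ => sq_nonneg _
  simp only [Finset.sum_sub_distrib, Finset.sum_add_distrib, Finset.sum_neg_distrib,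
    ← Finset.mul_sum] at hmain hcross hmixed hdg ⊢
  nlinarith [sq_nonneg (P * ∑ i, a i i - ∑ j, d j * g j), mul_le_mul_of_nonneg_right hd hg]

section Hessian

variable {ι : Type*} [Fintype ι] [DecidableEq ι]

local notation "∂[" i "]" => dirDeriv (EuclideanSpace.single i (1 : ℝ))

lemma norm_sq_eq_sum_sq_apply_single (L : EuclideanSpace ℝ ι →L[ℝ] ℝ) :
    ‖L‖ ^ 2 = ∑ i, L (EuclideanSpace.single i 1) ^ 2 := by
  set w := (InnerProductSpace.toDual ℝ (EuclideanSpace ℝ ι)).symm L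
  have hL : ∀ v, L v = inner ℝ w v := fun v => InnerProductSpace.toDual_symm_apply.symm
  rw [← (InnerProductSpace.toDual ℝ _).symm.norm_map L, EuclideanSpace.norm_sq_eq]
  refine Finset.sum_congr rfl fun i _ => ?_
  rw [hL, EuclideanSpace.inner_single_right, Real.norm_eq_abs, sq_abs]
  simp [w]

lemma norm_gradient_eq_norm_fderiv {F : Type*} [NormedAddCommGroup F] [InnerProductSpace ℝ F]
    [CompleteSpace F] (f : F → ℝ) (x : F) : ‖gradient f x‖ = ‖fderiv ℝ f x‖ :=
  (InnerProductSpace.toDual ℝ F).symm.norm_map _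

theorem sum_integral_sq_mul_hessian_sq_eq {p ψ : EuclideanSpace ℝ ι → ℝ} (hp : ContDiff ℝ 1 p)
    (hpc : HasCompactSupport p) (hψ : ContDiff ℝ 3 ψ) :
    ∑ i, ∑ j, ∫ x, p x ^ 2 * ∂[i] (∂[j] ψ) x ^ 2 =
      ∫ x, ∑ i, ∑ j, (p x ^ 2 * ∂[j] (∂[j] ψ) x * ∂[i] (∂[i] ψ) x
        + 2 * p x * ∂[j] p x * ∂[j] ψ x * ∂[i] (∂[i] ψ) x
        - 2 * p x * ∂[i] p x * ∂[i] (∂[j] ψ) x * ∂[j] ψ x) := by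
  have hg : ∀ j, Continuous (∂[j] ψ) := fun j => hψ.continuous_dirDeriv (by norm_num) _
  have ha : ∀ i j, Continuous (∂[i] (∂[j] ψ)) := fun i j =>
    (hψ.contDiff_dirDeriv (m := 2) (by norm_num) _).continuous_dirDeriv (by norm_num) _
  have hd : ∀ i, Continuous (∂[i] p) := fun i => hp.continuous_dirDeriv one_ne_zero _
  have hpd := hp.differentiable one_ne_zero
  rw [integral_finsetSum _ fun i _ => integrable_finsetSum _ fun j _ =>
    Continuous.integrable_of_eq_zero_of_hasCompactSupport (by fun_prop) hpc
      fun x hx => by simp [hx]]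
  refine Finset.sum_congr rfl fun i _ => ?_
  rw [integral_finsetSum _ fun j _ =>
    Continuous.integrable_of_eq_zero_of_hasCompactSupport (by fun_prop) hpc
      fun x hx => by simp [hx]]
  refine Finset.sum_congr rfl fun j _ => ?_
  rw [integral_mul_sq_dirDeriv_eq (hp.pow 2) (hpc.comp_left (g := (· ^ 2)) (by norm_num)) hψ]
  congr 1 with x
  rw [dirDeriv_sq (hpd x), dirDeriv_sq (hpd x)]

theorem sum_integral_sq_mul_hessian_sq_le {p q ψ : EuclideanSpace ℝ ι → ℝ} (hp : ContDiff ℝ 1 p)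
    (hpc : HasCompactSupport p) (hpq : ∀ x, ‖fderiv ℝ p x‖ ≤ q x) (hψ : ContDiff ℝ 3 ψ)
    (hq : Integrable (fun x => q x ^ 2 * ‖gradient ψ x‖ ^ 2)) :
    ∑ i, ∑ j, ∫ x, p x ^ 2 * ∂[i] (∂[j] ψ) x ^ 2
      ≤ 4 * (∫ x, p x ^ 2 * (∑ i, ∂[i] (∂[i] ψ) x) ^ 2)
        + 6 * ∫ x, q x ^ 2 * ‖gradient ψ x‖ ^ 2 := by
  have ha : ∀ i j, Continuous (∂[i] (∂[j] ψ)) := fun i j =>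
    (hψ.contDiff_dirDeriv (m := 2) (by norm_num) _).continuous_dirDeriv (by norm_num) _
  have hlap : Integrable (fun x => p x ^ 2 * (∑ i, ∂[i] (∂[i] ψ) x) ^ 2) :=
    Continuous.integrable_of_eq_zero_of_hasCompactSupport (by fun_prop) hpc
      fun x hx => by simp [hx]
  have hhess : ∀ i j, Integrable (fun x => p x ^ 2 * ∂[i] (∂[j] ψ) x ^ 2) := fun i j =>
    Continuous.integrable_of_eq_zero_of_hasCompactSupport (by fun_prop) hpc
      fun x hx => by simp [hx]
  have hhess' : Integrable (fun x => ∑ i, ∑ j, p x ^ 2 * ∂[i] (∂[j] ψ) x ^ 2) :=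
    integrable_finsetSum _ fun i _ => integrable_finsetSum _ fun j _ => hhess i j
  have hsum : ∫ x, ∑ i, ∑ j, p x ^ 2 * ∂[i] (∂[j] ψ) x ^ 2
      = ∑ i, ∑ j, ∫ x, p x ^ 2 * ∂[i] (∂[j] ψ) x ^ 2 := by
    rw [integral_finsetSum _ fun i _ => integrable_finsetSum _ fun j _ => hhess i j]
    exact Finset.sum_congr rfl fun i _ => integral_finsetSum _ fun j _ => hhess i j
  have hpt : ∀ x, ∑ i, ∑ j, (p x ^ 2 * ∂[j] (∂[j] ψ) x * ∂[i] (∂[i] ψ) x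
        + 2 * p x * ∂[j] p x * ∂[j] ψ x * ∂[i] (∂[i] ψ) x
        - 2 * p x * ∂[i] p x * ∂[i] (∂[j] ψ) x * ∂[j] ψ x)
      ≤ 2 * (p x ^ 2 * (∑ i, ∂[i] (∂[i] ψ) x) ^ 2)
        + (1 / 2) * ∑ i, ∑ j, p x ^ 2 * ∂[i] (∂[j] ψ) x ^ 2
        + 3 * (q x ^ 2 * ‖gradient ψ x‖ ^ 2) := by
    intro x
    rw [norm_gradient_eq_norm_fderiv, norm_sq_eq_sum_sq_apply_single]
    refine sum_hessian_integrand_le _ _ (fun i => ∂[i] p x) (fun j => ∂[j] ψ x)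
      (fun i j => ∂[i] (∂[j] ψ) x) ?_
    rw [show ∑ i, ∂[i] p x ^ 2 = ‖fderiv ℝ p x‖ ^ 2 from (norm_sq_eq_sum_sq_apply_single _).symm]
    exact pow_le_pow_left₀ (norm_nonneg _) (hpq x) 2
  have hg : ∀ j, Continuous (∂[j] ψ) := fun j => hψ.continuous_dirDeriv (by norm_num) _
  have hd : ∀ i, Continuous (∂[i] p) := fun i => hp.continuous_dirDeriv one_ne_zero _
  have hrhs := ((hlap.const_mul 2).add (hhess'.const_mul (1 / 2))).add (hq.const_mul 3)
  have hsplit := integral_add ((hlap.const_mul 2).add (hhess'.const_mul (1 / 2))) (hq.const_mul 3)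
  have hsplit' := integral_add (hlap.const_mul 2) (hhess'.const_mul (1 / 2))
  have key := (sum_integral_sq_mul_hessian_sq_eq hp hpc hψ).trans_le (integral_mono
    (Continuous.integrable_of_eq_zero_of_hasCompactSupport (by fun_prop) hpc
      fun x hx => by simp [hx]) hrhs hpt)
  simp only [Pi.add_apply] at hsplit hsplit' key
  rw [hsplit, hsplit', integral_const_mul, integral_const_mul, integral_const_mul, hsum] at key
  linarith

theorem sum_integral_cutoff_sq_mul_hessian_le {ψ η : EuclideanSpace ℝ ι → ℝ} {c κ γ : ℝ}
    (y : EuclideanSpace ℝ ι) (hψ : ContDiff ℝ 3 ψ) (hη : ContDiff ℝ 1 η)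
    (hη₀₁ : ∀ x, η x ∈ Set.Icc 0 1) (hηc : ∀ x, ‖gradient η x‖ ^ 2 ≤ c * η x) (hγ₀ : 0 ≤ γ)
    (hγ₁ : γ ≤ 1) (hκ : ∀ t, |deriv Real.smoothTransition t| ≤ κ)
    (hG : Integrable (fun x => η x * ‖gradient ψ x‖ ^ 2 * Real.exp (-γ * dist x y) ^ 2))
    (hL : Integrable (fun x => η x * (∑ i, ∂[i] (∂[i] ψ) x) ^ 2 * Real.exp (-γ * dist x y) ^ 2))
    (n : ℕ) :
    ∑ i, ∑ j, ∫ x, cutoff (n + 1) y x ^ 2 * (η x ^ 2 * ∂[i] (∂[j] ψ) x ^ 2 * expWeight γ y x ^ 2)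
      ≤ (4 + 6 * (√c + κ + 1) ^ 2) *
        ((∫ x, η x * ‖gradient ψ x‖ ^ 2 * Real.exp (-γ * dist x y) ^ 2)
          + ∫ x, η x * (∑ i, ∂[i] (∂[i] ψ) x) ^ 2 * Real.exp (-γ * dist x y) ^ 2) := by
  set K := √c + κ + 1
  set p := fun x => η x * cutoff (n + 1) y x * expWeight γ y x
  set q := fun x => K * √(η x) * expWeight γ y x
  have hη₀ : ∀ x, 0 ≤ η x := fun x => (hη₀₁ x).1
  have hp : ContDiff ℝ 1 p := (hη.mul (contDiff_cutoff _ y)).mul (contDiff_expWeight γ y)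
  have hpc : HasCompactSupport p :=
    (hasCompactSupport_cutoff (by positivity) y).mul_left.mul_right
  have hpq : ∀ x, ‖fderiv ℝ p x‖ ≤ q x := fun x =>
    norm_fderiv_mul_cutoff_mul_expWeight_le hη hη₀₁
      (fun x => norm_gradient_eq_norm_fderiv η x ▸ hηc x) hγ₀ hγ₁ hκ (by simp) y x
  have hgrad : Continuous fun x => η x * ‖gradient ψ x‖ ^ 2 := by
    have := hψ.continuous_fderiv (by norm_num)
    have := hη.continuous
    simp_rw [norm_gradient_eq_norm_fderiv]
    fun_prop
  have hq : (fun x => q x ^ 2 * ‖gradient ψ x‖ ^ 2)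
      = fun x => K ^ 2 * (η x * ‖gradient ψ x‖ ^ 2 * expWeight γ y x ^ 2) := by
    ext x
    simp only [q, mul_pow, Real.sq_sqrt (hη₀ x)]
    ring
  have hqint : Integrable (fun x => q x ^ 2 * ‖gradient ψ x‖ ^ 2) :=
    hq ▸ (hG.mul_expWeight_sq hγ₀ hgrad.aestronglyMeasurable).const_mul _
  have hlap : ∫ x, p x ^ 2 * (∑ i, ∂[i] (∂[i] ψ) x) ^ 2
      ≤ ∫ x, η x * (∑ i, ∂[i] (∂[i] ψ) x) ^ 2 * Real.exp (-γ * dist x y) ^ 2 :=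
    integral_mono_of_nonneg (ae_of_all _ fun x => mul_nonneg (sq_nonneg _) (sq_nonneg _)) hL
      (ae_of_all _ fun x => by
        simpa only [mul_right_comm] using mul_le_mul_of_nonneg_right
          (mul_cutoff_mul_expWeight_sq_le (hη₀₁ x) hγ₀) (sq_nonneg (∑ i, ∂[i] (∂[i] ψ) x)))
  have hgrad : ∫ x, q x ^ 2 * ‖gradient ψ x‖ ^ 2
      ≤ K ^ 2 * ∫ x, η x * ‖gradient ψ x‖ ^ 2 * Real.exp (-γ * dist x y) ^ 2 := by
    rw [hq, integral_const_mul]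
    exact mul_le_mul_of_nonneg_left
      (integral_mul_expWeight_sq_le (fun x => mul_nonneg (hη₀ x) (sq_nonneg _)) hγ₀ hG)
      (sq_nonneg K)
  have hL₀ : 0 ≤ ∫ x, η x * (∑ i, ∂[i] (∂[i] ψ) x) ^ 2 * Real.exp (-γ * dist x y) ^ 2 :=
    integral_nonneg fun x => mul_nonneg (mul_nonneg (hη₀ x) (sq_nonneg _)) (sq_nonneg _)
  have hG₀ : 0 ≤ ∫ x, η x * ‖gradient ψ x‖ ^ 2 * Real.exp (-γ * dist x y) ^ 2 :=
    integral_nonneg fun x => mul_nonneg (mul_nonneg (hη₀ x) (sq_nonneg _)) (sq_nonneg _)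
  calc _ = ∑ i, ∑ j, ∫ x, p x ^ 2 * ∂[i] (∂[j] ψ) x ^ 2 :=
        Finset.sum_congr rfl fun i _ => Finset.sum_congr rfl fun j _ =>
          integral_congr_ae (ae_of_all _ fun x => by simp only [p]; ring)
    _ ≤ 4 * (∫ x, p x ^ 2 * (∑ i, ∂[i] (∂[i] ψ) x) ^ 2) + 6 * ∫ x, q x ^ 2 * ‖gradient ψ x‖ ^ 2 :=
        sum_integral_sq_mul_hessian_sq_le hp hpc hpq hψ hqint
    _ ≤ _ := by nlinarith [mul_nonneg (sq_nonneg K) hL₀]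

end Hessian

end

theorem stmt_14_general (cη : ℝ) :
    ∃ C : ℝ, 0 < C ∧
      ∀ (ψ η : EuclideanSpace ℝ (Fin 3) → ℝ) (γ : ℝ) (y : EuclideanSpace ℝ (Fin 3)),
        0 < γ → γ ≤ 1 →
        ContDiff ℝ 3 ψ →
        ContDiff ℝ 1 η → (∀ x, η x ∈ Set.Icc (0:ℝ) 1) →
        (∀ x, ‖gradient η x‖ ^ 2 ≤ cη * η x) →
        Integrable (fun x => η x * ‖gradient ψ x‖ ^ 2 * (Real.exp (-γ * dist x y)) ^ 2) →
        (∀ i j : Fin 3, Integrable (fun x => (η x) ^ 2 *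
          (fderiv ℝ (fun z => fderiv ℝ ψ z (EuclideanSpace.single j 1)) x
            (EuclideanSpace.single i 1)) ^ 2 * (Real.exp (-γ * dist x y)) ^ 2)) →
        Integrable (fun x => η x *
          (∑ i : Fin 3, fderiv ℝ (fun z => fderiv ℝ ψ z (EuclideanSpace.single i 1)) x
            (EuclideanSpace.single i 1)) ^ 2 * (Real.exp (-γ * dist x y)) ^ 2) →
        (∑ i : Fin 3, ∑ j : Fin 3, ∫ x, (η x) ^ 2 *
            (fderiv ℝ (fun z => fderiv ℝ ψ z (EuclideanSpace.single j 1)) x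
              (EuclideanSpace.single i 1)) ^ 2 * (Real.exp (-γ * dist x y)) ^ 2) ≤
          C * ((∫ x, η x * ‖gradient ψ x‖ ^ 2 * (Real.exp (-γ * dist x y)) ^ 2) +
            ∫ x, η x * (∑ i : Fin 3,
              fderiv ℝ (fun z => fderiv ℝ ψ z (EuclideanSpace.single i 1)) x
                (EuclideanSpace.single i 1)) ^ 2 * (Real.exp (-γ * dist x y)) ^ 2) := by
  obtain ⟨κ, hκ⟩ := exists_abs_deriv_smoothTransition_le
  refine ⟨Real.exp 1 ^ 2 * (4 + 6 * (√cη + κ + 1) ^ 2), by positivity, ?_⟩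
  intro ψ η γ y hγ₀ hγ₁ hψ hη hη₀₁ hηc hG hH hL
  have hhess : ∀ i j : Fin 3, Continuous fun x => η x ^ 2 * dirDeriv (EuclideanSpace.single i 1)
      (dirDeriv (EuclideanSpace.single j 1) ψ) x ^ 2 := fun i j =>
    (hη.continuous.pow 2).mul ((((hψ.contDiff_dirDeriv (m := 2) (by norm_num) _).continuous_dirDeriv
      (by norm_num) _)).pow 2)
  have hlim := tendsto_finsetSum Finset.univ fun i _ => tendsto_finsetSum Finset.univ fun j _ =>
    tendsto_integral_cutoff_sq_mul (y := y)
      ((hH i j).mul_expWeight_sq hγ₀.le (hhess i j).aestronglyMeasurable)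
  have hbound := le_of_tendsto' hlim
    (sum_integral_cutoff_sq_mul_hessian_le y hψ hη hη₀₁ hηc hγ₀.le hγ₁ hκ hG hL)
  calc _ ≤ ∑ i : Fin 3, ∑ j : Fin 3, Real.exp 1 ^ 2 * ∫ x, η x ^ 2 * dirDeriv
        (EuclideanSpace.single i 1) (dirDeriv (EuclideanSpace.single j 1) ψ) x ^ 2
          * expWeight γ y x ^ 2 :=
        Finset.sum_le_sum fun i _ => Finset.sum_le_sum fun j _ =>
          integral_mul_exp_neg_dist_sq_le (fun x => by positivity) hγ₀.le hγ₁
            ((hH i j).mul_expWeight_sq hγ₀.le (hhess i j).aestronglyMeasurable)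
    _ ≤ _ := by
        simp only [← Finset.mul_sum]
        rw [mul_assoc (Real.exp 1 ^ 2)]
        exact mul_le_mul_of_nonneg_left hbound (by positivity)

/-- Weighted Hessian estimate: with cutoff `η` (with `|∇η|² ≤ c_η η`) and exponential
weight `ξ = e^{-γ|·-y|}`, `0 < γ ≤ 1`, the weighted `L²` norm of the Hessian of `ψ` is
controlled by those of its gradient and Laplacian, with a constant depending only on
`c_η`. -/
theorem stmt_14 (cη : ℝ) (hcη : 0 < cη) :
    ∃ C : ℝ, 0 < C ∧
      ∀ (ψ η : EuclideanSpace ℝ (Fin 3) → ℝ) (γ : ℝ) (y : EuclideanSpace ℝ (Fin 3)),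
        0 < γ → γ ≤ 1 →
        ContDiff ℝ 3 ψ →
        ContDiff ℝ 1 η → (∀ x, η x ∈ Set.Icc (0:ℝ) 1) →
        (∀ x, ‖gradient η x‖ ^ 2 ≤ cη * η x) →
        Integrable (fun x => η x * ‖gradient ψ x‖ ^ 2 * (Real.exp (-γ * dist x y)) ^ 2) →
        (∀ i j : Fin 3, Integrable (fun x => (η x) ^ 2 *
          (fderiv ℝ (fun z => fderiv ℝ ψ z (EuclideanSpace.single j 1)) x
            (EuclideanSpace.single i 1)) ^ 2 * (Real.exp (-γ * dist x y)) ^ 2)) →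
        Integrable (fun x => η x *
          (∑ i : Fin 3, fderiv ℝ (fun z => fderiv ℝ ψ z (EuclideanSpace.single i 1)) x
            (EuclideanSpace.single i 1)) ^ 2 * (Real.exp (-γ * dist x y)) ^ 2) →
        (∑ i : Fin 3, ∑ j : Fin 3, ∫ x, (η x) ^ 2 *
            (fderiv ℝ (fun z => fderiv ℝ ψ z (EuclideanSpace.single j 1)) x
              (EuclideanSpace.single i 1)) ^ 2 * (Real.exp (-γ * dist x y)) ^ 2) ≤
          C * ((∫ x, η x * ‖gradient ψ x‖ ^ 2 * (Real.exp (-γ * dist x y)) ^ 2) +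
            ∫ x, η x * (∑ i : Fin 3,
              fderiv ℝ (fun z => fderiv ℝ ψ z (EuclideanSpace.single i 1)) x
                (EuclideanSpace.single i 1)) ^ 2 * (Real.exp (-γ * dist x y)) ^ 2) :=
  stmt_14_general cη
end
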